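/- arXiv:2410.15782 — 2 statements merged into one kernel-verified Lean document; each statement's English description precedes it below -/
import Mathlib

section
/- Let ω₁, ω₂ : [0,t₀) → [0,∞) be continuous, strictly increasing functions with ω₁(0) = ω₂(0) = 0. Then for every a, c > 0 and b ∈ (0,t₀), there exists t̃₀ ∈ (0,b) such that the function ω̃(t) := t·(a + ∫_t^b ω₁(s)/s ds)·exp(c·∫_t^b ω₂(s)/s ds) is continuous, strictly increasing on (0,t̃₀), and satisfies lim_{t→0⁺} ω̃(t) = 0. -/
/-!
Differentiating, `ω̃' = exp (c I₂) ((a + I₁) (1 - c ω₂) - ω₁)` with `Iᵢ(t) = ∫_t^b ωᵢ(s)/s ds`.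
As `I₁ ≥ 0` and `ωᵢ(t) → 0`, this is positive on an interval `(0, δ)` on which `ω₁ < a/2` and
`c ω₂ < 1/2`. There `c ∫_t^δ ω₂(s)/s ds ≤ (1/2) log (δ/t)` and `∫_t^δ ω₁(s)/s ds ≤ (a/2) log (δ/t)`,
whence `ω̃(t) = O(t^(1/2) (1 + |log t|)) → 0`.
-/

open MeasureTheory Set Filter Topology Real

theorem hasDerivAt_integral_left_of_continuousOn_Ioc {g : ℝ → ℝ} {l b t : ℝ}
    (hg : ContinuousOn g (Ioc l b)) (ht : t ∈ Ioo l b) :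
    HasDerivAt (fun u => ∫ s in u..b, g s) (-g t) t :=
  intervalIntegral.integral_hasDerivAt_left
    ((hg.mono (Icc_subset_Ioc ht.1 le_rfl)).intervalIntegrable_of_Icc ht.2.le)
    ((hg.mono Ioo_subset_Ioc_self).stronglyMeasurableAtFilter isOpen_Ioo t ht)
    (hg.continuousAt (Ioc_mem_nhds ht.1 ht.2))

theorem integral_div_le_mul_log_add {ω : ℝ → ℝ} {t δ b M : ℝ}
    (hω : ContinuousOn ω (Icc t b)) (ht : 0 < t) (htδ : t ≤ δ) (hδb : δ ≤ b)
    (hM : ∀ s ∈ Icc t δ, ω s ≤ M) :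
    ∫ s in t..b, ω s / s ≤ M * (log δ - log t) + ∫ s in δ..b, ω s / s := by
  have hcont : ContinuousOn (fun s => ω s / s) (Icc t b) :=
    hω.div continuousOn_id fun s hs => (ht.trans_le hs.1).ne'
  have hint : ∀ x y, t ≤ x → x ≤ y → y ≤ b → IntervalIntegrable (fun s => ω s / s) volume x y :=
    fun x y htx hxy hyb =>
      (hcont.mono (Icc_subset_Icc htx hyb)).intervalIntegrable_of_Icc hxy
  have hbound : ∫ s in t..δ, ω s / s ≤ ∫ s in t..δ, M * (1 / s) := by
    refine intervalIntegral.integral_mono_on htδ (hint t δ le_rfl htδ hδb) ?_ fun s hs => ?_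
    · exact (continuousOn_const.mul (continuousOn_const.div continuousOn_id
        fun s hs => (ht.trans_le hs.1).ne')).intervalIntegrable_of_Icc htδ
    · rw [mul_one_div]
      exact div_le_div_of_nonneg_right (hM s hs) (ht.le.trans hs.1)
  have h0 : (0 : ℝ) ∉ uIcc t δ := by
    rw [uIcc_of_le htδ]; exact fun h => ht.not_ge h.1
  rw [intervalIntegral.integral_const_mul, integral_one_div h0, log_div (ht.trans_le htδ).ne'
    ht.ne'] at hbound
  rw [← intervalIntegral.integral_add_adjacent_intervals (hint t δ le_rfl htδ hδb)
    (hint δ b htδ hδb le_rfl)]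
  linarith

theorem tendsto_mul_sub_log_mul_exp_sub_log (A M B : ℝ) {κ : ℝ} (hκ : κ < 1) :
    Tendsto (fun t => t * (A - M * log t) * exp (B - κ * log t)) (𝓝[>] 0) (𝓝 0) := by
  have hrpow : Tendsto (fun t : ℝ => t ^ (1 - κ)) (𝓝[>] 0) (𝓝 0) := by
    simpa [zero_rpow (sub_ne_zero.2 hκ.ne')] using
      ((continuousAt_rpow_const 0 (1 - κ) (Or.inr (sub_pos.2 hκ).le)).tendsto).mono_left
        nhdsWithin_le_nhds
  have hlim : Tendsto (fun t => exp B * (A * t ^ (1 - κ) - M * (log t * t ^ (1 - κ))))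
      (𝓝[>] 0) (𝓝 0) := by
    simpa using ((hrpow.const_mul A).sub
      ((tendsto_log_mul_rpow_nhdsGT_zero (sub_pos.2 hκ)).const_mul M)).const_mul (exp B)
  refine hlim.congr' ?_
  filter_upwards [self_mem_nhdsWithin] with t (ht : 0 < t)
  have hpow : t * exp (B - κ * log t) = exp B * t ^ (1 - κ) := by
    rw [rpow_def_of_pos ht, ← exp_add]
    nth_rewrite 1 [← exp_log ht]
    rw [← exp_add]
    ring_nf
  linear_combination -(A - M * log t) * hpow

theorem integral_div_nonneg_of_nonneg {ω : ℝ → ℝ} {t b : ℝ} (hnn : ∀ s ∈ Ioc 0 b, 0 ≤ ω s)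
    (ht : 0 < t) (htb : t ≤ b) : 0 ≤ ∫ s in t..b, ω s / s :=
  intervalIntegral.integral_nonneg htb fun s hs =>
    div_nonneg (hnn s ⟨ht.trans_le hs.1, hs.2⟩) (ht.le.trans hs.1)

noncomputable def modulusExp (ω₁ ω₂ : ℝ → ℝ) (a c b t : ℝ) : ℝ :=
  t * (a + ∫ s in t..b, ω₁ s / s) * exp (c * ∫ s in t..b, ω₂ s / s)

section modulusExp

variable {ω₁ ω₂ : ℝ → ℝ} {a c b : ℝ}

theorem hasDerivAt_modulusExp (hω₁ : ContinuousOn ω₁ (Ioc 0 b))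
    (hω₂ : ContinuousOn ω₂ (Ioc 0 b)) {t : ℝ} (ht : t ∈ Ioo 0 b) :
    HasDerivAt (modulusExp ω₁ ω₂ a c b)
      (exp (c * ∫ s in t..b, ω₂ s / s) *
        ((a + ∫ s in t..b, ω₁ s / s) * (1 - c * ω₂ t) - ω₁ t)) t := by
  have hdiv : ∀ ω : ℝ → ℝ, ContinuousOn ω (Ioc 0 b) →
      HasDerivAt (fun u => ∫ s in u..b, ω s / s) (-(ω t / t)) t := fun ω hω =>
    hasDerivAt_integral_left_of_continuousOn_Ioc
      (hω.div continuousOn_id fun s hs => hs.1.ne') ht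
  have h := ((hasDerivAt_id t).mul ((hdiv ω₁ hω₁).const_add a)).mul
    (((hdiv ω₂ hω₂).const_mul c).exp)
  refine h.congr_deriv ?_
  simp only [id, Pi.mul_apply]
  field_simp [ht.1.ne']
  ring

theorem continuousOn_modulusExp (hω₁ : ContinuousOn ω₁ (Ioc 0 b))
    (hω₂ : ContinuousOn ω₂ (Ioc 0 b)) : ContinuousOn (modulusExp ω₁ ω₂ a c b) (Ioo 0 b) :=
  fun _ ht => (hasDerivAt_modulusExp hω₁ hω₂ ht).continuousAt.continuousWithinAt

theorem modulusExp_nonneg (hnn : ∀ s ∈ Ioc 0 b, 0 ≤ ω₁ s) (ha : 0 ≤ a) {t : ℝ}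
    (ht : 0 < t) (htb : t ≤ b) : 0 ≤ modulusExp ω₁ ω₂ a c b t :=
  mul_nonneg (mul_nonneg ht.le (add_nonneg ha (integral_div_nonneg_of_nonneg hnn ht htb)))
    (exp_pos _).le

theorem strictMonoOn_modulusExp (hω₁ : ContinuousOn ω₁ (Ioc 0 b))
    (hω₂ : ContinuousOn ω₂ (Ioc 0 b)) (hnn : ∀ s ∈ Ioc 0 b, 0 ≤ ω₁ s) (ha : 0 < a)
    {δ : ℝ} (hδb : δ ≤ b) (hsmall : ∀ s ∈ Ioo 0 δ, ω₁ s < a / 2 ∧ c * ω₂ s ≤ 1 / 2) :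
    StrictMonoOn (modulusExp ω₁ ω₂ a c b) (Ioo 0 δ) := by
  have hsub : Ioo 0 δ ⊆ Ioo 0 b := Ioo_subset_Ioo_right hδb
  refine strictMonoOn_of_deriv_pos (convex_Ioo 0 δ)
    ((continuousOn_modulusExp hω₁ hω₂).mono hsub) fun t ht => ?_
  rw [interior_Ioo] at ht
  rw [(hasDerivAt_modulusExp hω₁ hω₂ (hsub ht)).deriv]
  have hI := integral_div_nonneg_of_nonneg hnn ht.1 (hsub ht).2.le
  obtain ⟨h₁, h₂⟩ := hsmall t ht
  refine mul_pos (exp_pos _) ?_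
  nlinarith

theorem tendsto_modulusExp_nhdsGT_zero (hω₁ : ContinuousOn ω₁ (Ioc 0 b))
    (hω₂ : ContinuousOn ω₂ (Ioc 0 b)) (hnn : ∀ s ∈ Ioc 0 b, 0 ≤ ω₁ s) (ha : 0 ≤ a)
    {δ M κ : ℝ} (hδ : δ ∈ Ioc 0 b) (hM : ∀ s ∈ Ioc 0 δ, ω₁ s ≤ M)
    (hκ : ∀ s ∈ Ioc 0 δ, c * ω₂ s ≤ κ) (hκ1 : κ < 1) :
    Tendsto (modulusExp ω₁ ω₂ a c b) (𝓝[>] 0) (𝓝 0) := by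
  set C₁ := ∫ s in δ..b, ω₁ s / s
  set C₂ := ∫ s in δ..b, ω₂ s / s
  refine tendsto_of_tendsto_of_tendsto_of_le_of_le' tendsto_const_nhds
    (tendsto_mul_sub_log_mul_exp_sub_log (a + C₁ + M * log δ) M (c * C₂ + κ * log δ) hκ1) ?_ ?_
  all_goals filter_upwards [Ioo_mem_nhdsGT hδ.1] with t ht
  · exact modulusExp_nonneg hnn ha ht.1 (ht.2.le.trans hδ.2)
  have hIcc : Icc t b ⊆ Ioc 0 b := Icc_subset_Ioc ht.1 le_rfl
  have hIcc' : Icc t δ ⊆ Ioc 0 δ := Icc_subset_Ioc ht.1 le_rfl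
  have h₁ : ∫ s in t..b, ω₁ s / s ≤ M * (log δ - log t) + C₁ :=
    integral_div_le_mul_log_add (hω₁.mono hIcc) ht.1 ht.2.le hδ.2 fun s hs => hM s (hIcc' hs)
  have h₂ : c * ∫ s in t..b, ω₂ s / s ≤ κ * (log δ - log t) + c * C₂ := by
    simpa only [mul_div_assoc, intervalIntegral.integral_const_mul] using
      integral_div_le_mul_log_add (ω := fun s => c * ω₂ s)
        ((continuousOn_const.mul hω₂).mono hIcc) ht.1 ht.2.le hδ.2 fun s hs => hκ s (hIcc' hs)
  have hI := integral_div_nonneg_of_nonneg hnn ht.1 (ht.2.le.trans hδ.2)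
  have ht0 := ht.1.le
  unfold modulusExp
  gcongr
  · exact mul_nonneg ht0 (by linarith)
  all_goals linarith

end modulusExp

theorem modulus_exp_monotonicity_general (t₀ : ℝ) (ω₁ ω₂ : ℝ → ℝ)
    (h₁c : ContinuousOn ω₁ (Set.Ico 0 t₀)) (h₂c : ContinuousOn ω₂ (Set.Ico 0 t₀))
    (h₁0 : ω₁ 0 = 0) (h₂0 : ω₂ 0 = 0)
    (h₁nn : ∀ t ∈ Set.Ico (0:ℝ) t₀, 0 ≤ ω₁ t)
    (a c b : ℝ) (ha : 0 < a) (hb : b ∈ Set.Ioo 0 t₀) :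
    ∃ tbar ∈ Set.Ioo 0 b,
      ContinuousOn
        (fun t => t * (a + ∫ s in t..b, ω₁ s / s) * Real.exp (c * ∫ s in t..b, ω₂ s / s))
        (Set.Ioo 0 tbar) ∧
      StrictMonoOn
        (fun t => t * (a + ∫ s in t..b, ω₁ s / s) * Real.exp (c * ∫ s in t..b, ω₂ s / s))
        (Set.Ioo 0 tbar) ∧
      Filter.Tendsto
        (fun t => t * (a + ∫ s in t..b, ω₁ s / s) * Real.exp (c * ∫ s in t..b, ω₂ s / s))
        (nhdsWithin 0 (Set.Ioi 0)) (nhds 0) := by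
  obtain ⟨hb0, hbt⟩ := hb
  have hsub : Ioc 0 b ⊆ Ico 0 t₀ := fun s hs => ⟨hs.1.le, hs.2.trans_lt hbt⟩
  have hlim : ∀ ω : ℝ → ℝ, ContinuousOn ω (Ico 0 t₀) → Tendsto ω (𝓝[>] 0) (𝓝 (ω 0)) :=
    fun ω hω => ((hω 0 ⟨le_rfl, hb0.trans hbt⟩).mono_of_mem_nhdsWithin
      (Ico_mem_nhdsGT (hb0.trans hbt))).tendsto
  have hsmall : ∀ᶠ s in 𝓝[>] 0, s < b ∧ ω₁ s < a / 2 ∧ c * ω₂ s < 1 / 2 :=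
    (eventually_nhdsWithin_of_eventually_nhds (eventually_lt_nhds hb0)).and <|
      ((hlim ω₁ h₁c).eventually_lt_const (by rw [h₁0]; exact half_pos ha)).and
        (((hlim ω₂ h₂c).const_mul c).eventually_lt_const (by rw [h₂0, mul_zero]; norm_num))
  obtain ⟨δ, hδ0, hδ⟩ := mem_nhdsGT_iff_exists_Ioc_subset.1 hsmall
  have hδb : δ < b := (hδ ⟨hδ0, le_rfl⟩).1
  have hω₁ := h₁c.mono hsub
  have hω₂ := h₂c.mono hsub
  have hnn : ∀ s ∈ Ioc 0 b, 0 ≤ ω₁ s := fun s hs => h₁nn s (hsub hs)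
  refine ⟨δ, ⟨hδ0, hδb⟩, (continuousOn_modulusExp hω₁ hω₂).mono (Ioo_subset_Ioo_right hδb.le),
    strictMonoOn_modulusExp hω₁ hω₂ hnn ha hδb.le fun s hs => ?_,
    tendsto_modulusExp_nhdsGT_zero hω₁ hω₂ hnn ha.le ⟨hδ0, hδb.le⟩ (fun s hs => (hδ hs).2.1.le)
      (fun s hs => (hδ hs).2.2.le) (by norm_num : (1 / 2 : ℝ) < 1)⟩
  obtain ⟨-, h₁, h₂⟩ := hδ (Ioo_subset_Ioc_self hs)
  exact ⟨h₁, h₂.le⟩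

/-- If `ω₁, ω₂` are moduli of continuity on `[0,t₀)`, then for every `a, c > 0` and
`b ∈ (0,t₀)` there exists `tbar₀ ∈ (0,b)` such that
`ω̃(t) = t (a + ∫_t^b ω₁(s)/s ds) exp(c ∫_t^b ω₂(s)/s ds)` is continuous, strictly
increasing on `(0,tbar₀)`, and tends to `0` as `t → 0⁺`. -/
theorem modulus_exp_monotonicity (t₀ : ℝ) (ω₁ ω₂ : ℝ → ℝ)
    (h₁c : ContinuousOn ω₁ (Set.Ico 0 t₀)) (h₂c : ContinuousOn ω₂ (Set.Ico 0 t₀))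
    (h₁m : StrictMonoOn ω₁ (Set.Ico 0 t₀)) (h₂m : StrictMonoOn ω₂ (Set.Ico 0 t₀))
    (h₁0 : ω₁ 0 = 0) (h₂0 : ω₂ 0 = 0)
    (h₁nn : ∀ t ∈ Set.Ico (0:ℝ) t₀, 0 ≤ ω₁ t) (h₂nn : ∀ t ∈ Set.Ico (0:ℝ) t₀, 0 ≤ ω₂ t)
    (a c b : ℝ) (ha : 0 < a) (hc : 0 < c) (hb : b ∈ Set.Ioo 0 t₀) :
    ∃ tbar ∈ Set.Ioo 0 b,
      ContinuousOn
        (fun t => t * (a + ∫ s in t..b, ω₁ s / s) * Real.exp (c * ∫ s in t..b, ω₂ s / s))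
        (Set.Ioo 0 tbar) ∧
      StrictMonoOn
        (fun t => t * (a + ∫ s in t..b, ω₁ s / s) * Real.exp (c * ∫ s in t..b, ω₂ s / s))
        (Set.Ioo 0 tbar) ∧
      Filter.Tendsto
        (fun t => t * (a + ∫ s in t..b, ω₁ s / s) * Real.exp (c * ∫ s in t..b, ω₂ s / s))
        (nhdsWithin 0 (Set.Ioi 0)) (nhds 0) :=
  modulus_exp_monotonicity_general t₀ ω₁ ω₂ h₁c h₂c h₁0 h₂0 h₁nn a c b ha hb
end

section
/- Let Ω be a Lipschitz domain with Lipschitz graph Γ, ‖∇Γ‖_{L^∞} ≤ L ≤ 1/C, and let d be the regularized distance defined as the inverse of P(x',x_n) = (x', (η_{x_n}*Γ)(x') + x_n). Then for every x ∈ Ω ∩ B_{1/2}, (1 − C‖∇Γ‖_{L^∞(B'_{d}(x'))})·(x_n − Γ(x')) ≤ d(x) ≤ (1 + C‖∇Γ‖_{L^∞(B'_{d}(x'))})·(x_n − Γ(x')), where C depends only on dimension. In particular, d is comparable to the vertical distance to the graph. -/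
open MeasureTheory Metric
open scoped NNReal

/-- Comparability of the regularized distance with the vertical distance to the graph:
if `Γ` is Lipschitz with constant `L ≤ 1/C`, `η` is a standard mollifier, and the
regularized distance `d` at the point `x = (x', x_n) ∈ Ω ∩ B_{1/2}` is characterized by
the inverse relation `(η_d * Γ)(x') + d = x_n` for `P(x',t) = (x', (η_t*Γ)(x') + t)`,
then `(1 - C‖∇Γ‖_{L^∞(B'_d(x'))})(x_n - Γ(x')) ≤ d ≤ (1 + C‖∇Γ‖_{L^∞(B'_d(x'))})(x_n - Γ(x'))`,
where `C` depends only on the dimension (here `m = n-1`, and the local gradient bound is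
expressed through the Lipschitz bound `K` of `Γ` on `B'_d(x')`). -/
theorem regularized_distance_comparable (m : ℕ) (hm : 1 ≤ m)
    (η : EuclideanSpace ℝ (Fin m) → ℝ) (hηsm : ContDiff ℝ (⊤ : ℕ∞) η)
    (hηsupp : ∀ z : EuclideanSpace ℝ (Fin m), 1 ≤ ‖z‖ → η z = 0)
    (hηnn : ∀ z, 0 ≤ η z) (hηint : (∫ z, η z) = 1) :
    ∃ C > 0, ∀ (Γ : EuclideanSpace ℝ (Fin m) → ℝ) (L : ℝ≥0),
      LipschitzWith L Γ → (L : ℝ) ≤ 1 / C →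
      ∀ (x' : EuclideanSpace ℝ (Fin m)) (xn dx : ℝ),
        Γ x' < xn → ‖x'‖ ^ 2 + xn ^ 2 < (1/2) ^ 2 → 0 < dx →
        ((∫ z, dx ^ (-(m:ℤ)) * η (dx⁻¹ • z) * Γ (x' + z)) + dx = xn) →
        ∀ K : ℝ, (∀ y ∈ ball x' dx, ∀ z ∈ ball x' dx, |Γ y - Γ z| ≤ K * ‖y - z‖) →
        (1 - C * K) * (xn - Γ x') ≤ dx ∧ dx ≤ (1 + C * K) * (xn - Γ x') := by
  refine ⟨2, by norm_num, ?_⟩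
  intro Γ L hΓ hL x' xn dx hΓx hB hd hinv K hK
  have hηc : Continuous η := hηsm.continuous
  -- K ≥ 0
  have hK0 : 0 ≤ K := by
    set e : EuclideanSpace ℝ (Fin m) := EuclideanSpace.single ⟨0, hm⟩ (dx/2)
    have he : ‖e‖ = dx / 2 := by
      simp [e, EuclideanSpace.norm_single, abs_of_pos hd]
    have h1 : x' + e ∈ ball x' dx := by
      rw [mem_ball, dist_eq_norm]
      simp only [add_sub_cancel_left]
      rw [he]; linarith
    have h2 : x' ∈ ball x' dx := mem_ball_self hd
    have := hK _ h1 _ h2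
    simp only [add_sub_cancel_left] at this
    nlinarith [abs_nonneg (Γ (x' + e) - Γ x'), he ▸ this]
  -- vanishing of η (dx⁻¹ • z) outside ball
  have hvan : ∀ z : EuclideanSpace ℝ (Fin m), dx ≤ ‖z‖ → η (dx⁻¹ • z) = 0 := by
    intro z hz
    apply hηsupp
    rw [norm_smul, Real.norm_eq_abs, abs_of_pos (inv_pos.2 hd),
      ← div_eq_inv_mul, le_div_iff₀ hd, one_mul]
    exact hz
  -- compact support of z ↦ η (dx⁻¹ • z)
  have hcs : HasCompactSupport (fun z : EuclideanSpace ℝ (Fin m) => η (dx⁻¹ • z)) := by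
    apply HasCompactSupport.intro (isCompact_closedBall (0 : EuclideanSpace ℝ (Fin m)) dx)
    intro z hz
    apply hvan
    simp only [mem_closedBall, dist_zero_right, not_le] at hz
    exact hz.le
  have hccont : Continuous fun z : EuclideanSpace ℝ (Fin m) => η (dx⁻¹ • z) :=
    hηc.comp (continuous_const_smul _)
  -- ∫ η(dx⁻¹ • z) dz = dx ^ m
  have hint1 : (∫ z : EuclideanSpace ℝ (Fin m), η (dx⁻¹ • z)) = dx ^ m := by
    rw [MeasureTheory.Measure.integral_comp_inv_smul_of_nonneg volume η hd.le,
      finrank_euclideanSpace_fin, hηint,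
      smul_eq_mul, mul_one]
  -- integrability of the mollified functions
  have hIg : Integrable (fun z : EuclideanSpace ℝ (Fin m) => dx ^ (-(m:ℤ)) * η (dx⁻¹ • z)) := by
    exact (hccont.integrable_of_hasCompactSupport hcs).const_mul _
  have hIf : Integrable (fun z : EuclideanSpace ℝ (Fin m) =>
      dx ^ (-(m:ℤ)) * η (dx⁻¹ • z) * Γ (x' + z)) := by
    apply Continuous.integrable_of_hasCompactSupport
    · exact ((continuous_const.mul hccont).mul
        (hΓ.continuous.comp (continuous_const.add continuous_id)))
    · apply HasCompactSupport.intro (isCompact_closedBall (0 : EuclideanSpace ℝ (Fin m)) dx)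
      intro z hz
      simp only [mem_closedBall, dist_zero_right, not_le] at hz
      rw [hvan z hz.le]; ring
  -- ∫ g = 1
  have hintg : (∫ z : EuclideanSpace ℝ (Fin m), dx ^ (-(m:ℤ)) * η (dx⁻¹ • z)) = 1 := by
    rw [MeasureTheory.integral_const_mul, hint1, zpow_neg, zpow_natCast,
      inv_mul_cancel₀ (pow_ne_zero _ hd.ne')]
  -- the error term
  set E : ℝ := ∫ z : EuclideanSpace ℝ (Fin m),
      dx ^ (-(m:ℤ)) * η (dx⁻¹ • z) * (Γ (x' + z) - Γ x') with hE
  have hEval : E = (xn - dx) - Γ x' := by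
    have : (fun z : EuclideanSpace ℝ (Fin m) =>
        dx ^ (-(m:ℤ)) * η (dx⁻¹ • z) * (Γ (x' + z) - Γ x'))
        = fun z => dx ^ (-(m:ℤ)) * η (dx⁻¹ • z) * Γ (x' + z)
          - Γ x' * (dx ^ (-(m:ℤ)) * η (dx⁻¹ • z)) := by
      funext z; ring
    rw [hE, this, MeasureTheory.integral_sub hIf (hIg.const_mul _),
      MeasureTheory.integral_const_mul, hintg, mul_one]
    linarith [hinv]
  -- generic bound: |E| ≤ c * dx whenever c bounds increments on the ball
  have hbound : ∀ c : ℝ, 0 ≤ c →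
      (∀ z : EuclideanSpace ℝ (Fin m), ‖z‖ < dx → |Γ (x' + z) - Γ x'| ≤ c * dx) →
      |E| ≤ c * dx := by
    intro c hc hcb
    have h1 : |E| ≤ ∫ z : EuclideanSpace ℝ (Fin m),
        (c * dx) * (dx ^ (-(m:ℤ)) * η (dx⁻¹ • z)) := by
      rw [hE]
      have habs : |∫ z : EuclideanSpace ℝ (Fin m),
          dx ^ (-(m:ℤ)) * η (dx⁻¹ • z) * (Γ (x' + z) - Γ x')| ≤
          ∫ z : EuclideanSpace ℝ (Fin m),
          |dx ^ (-(m:ℤ)) * η (dx⁻¹ • z) * (Γ (x' + z) - Γ x')| := by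
        have h0 := MeasureTheory.norm_integral_le_integral_norm (μ := volume)
          (f := fun z : EuclideanSpace ℝ (Fin m) =>
            dx ^ (-(m:ℤ)) * η (dx⁻¹ • z) * (Γ (x' + z) - Γ x'))
        simp only [Real.norm_eq_abs] at h0
        exact h0
      apply habs.trans
      have hf' : Integrable (fun z : EuclideanSpace ℝ (Fin m) =>
          dx ^ (-(m:ℤ)) * η (dx⁻¹ • z) * (Γ (x' + z) - Γ x')) := by
        have : (fun z : EuclideanSpace ℝ (Fin m) =>
            dx ^ (-(m:ℤ)) * η (dx⁻¹ • z) * (Γ (x' + z) - Γ x'))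
            = fun z => dx ^ (-(m:ℤ)) * η (dx⁻¹ • z) * Γ (x' + z)
              - Γ x' * (dx ^ (-(m:ℤ)) * η (dx⁻¹ • z)) := by funext z; ring
        rw [this]; exact hIf.sub (hIg.const_mul _)
      apply MeasureTheory.integral_mono hf'.abs (hIg.const_mul _)
      · intro z
        simp only [Pi.abs_apply]
        rcases lt_or_ge ‖z‖ dx with hz | hz
        · rw [abs_mul]
          have h2 : |dx ^ (-(m:ℤ)) * η (dx⁻¹ • z)| = dx ^ (-(m:ℤ)) * η (dx⁻¹ • z) := by
            rw [abs_of_nonneg]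
            exact mul_nonneg (zpow_nonneg hd.le _) (hηnn _)
          rw [h2, mul_comm ((c*dx)) _]
          exact mul_le_mul_of_nonneg_left (hcb z hz)
            (mul_nonneg (zpow_nonneg hd.le _) (hηnn _))
        · rw [hvan z hz]
          simp only [mul_zero, zero_mul, abs_zero]
          positivity
    calc |E| ≤ _ := h1
    _ = (c * dx) * 1 := by rw [MeasureTheory.integral_const_mul, hintg]
    _ = c * dx := mul_one _
  have hEK : |E| ≤ K * dx := by
    apply hbound K hK0
    intro z hz
    have h1 : x' + z ∈ ball x' dx := by
      rw [mem_ball, dist_eq_norm]; simpa using hz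
    have := hK _ h1 _ (mem_ball_self hd)
    simp only [add_sub_cancel_left] at this
    exact this.trans (by nlinarith)
  have hEL : |E| ≤ (1/2) * dx := by
    apply hbound (1/2) (by norm_num)
    intro z hz
    have h1 : |Γ (x' + z) - Γ x'| ≤ L * ‖z‖ := by
      have := hΓ.dist_le_mul (x' + z) x'
      rw [Real.dist_eq, dist_eq_norm] at this
      simpa using this
    have hL2 : (L : ℝ) ≤ 1/2 := by linarith [hL]
    calc |Γ (x' + z) - Γ x'| ≤ L * ‖z‖ := h1
    _ ≤ (1/2) * dx := by
        apply mul_le_mul hL2 hz.le (norm_nonneg _) (by norm_num)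
  -- conclude
  have habs1 := abs_le.1 hEK
  have habs2 := abs_le.1 hEL
  have hdx2 : dx ≤ 2 * (xn - Γ x') := by
    -- dx = (xn - Γ x') - E and E ≥ -dx/2
    nlinarith [habs2.1, hEval]
  constructor
  · nlinarith [habs1.2, hEval, hK0]
  · nlinarith [habs1.1, hEval, hK0, hdx2]
end
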